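/- Let K be a field and H a K-bialgebra with comultiplication Δ : H → H ⊗ H. Let j₁₃, j₂₃ : H ⊗ H → H ⊗ H ⊗ H be the algebra embeddings a ⊗ b ↦ a ⊗ 1 ⊗ b and a ⊗ b ↦ 1 ⊗ a ⊗ b. Suppose R ∈ H ⊗ H satisfies (Δ ⊗ id_H)(R) = j₁₃(R) · j₂₃(R). For a finite-dimensional K-vector space U and an algebra homomorphism ρ : H → End(U), define the transfer matrix 𝒯_ρ ∈ H as the image of R under the linear map H ⊗ H → H induced by a ⊗ b ↦ tr(ρ(a))·b. Given algebra homomorphisms ρ_V : H → End(V) and ρ_W : H → End(W) with V, W finite-dimensional, let ρ_{V⊗W} : H → End(V ⊗ W) be the composition of Δ with ρ_V ⊗ ρ_W and the canonical algebra map End(V) ⊗ End(W) → End(V ⊗ W). Then 𝒯_{ρ_{V⊗W}} = 𝒯_{ρ_V} · 𝒯_{ρ_W} in H. -/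
import Mathlib


open TensorProduct

set_option maxSynthPendingDepth 3

section

variable (K : Type*) [Field K] (H : Type*) [Semiring H] [Bialgebra K H]

/-- `j₁₃ : H ⊗ H → H ⊗ H ⊗ H`, `a ⊗ b ↦ a ⊗ 1 ⊗ b`. -/
noncomputable def j13 : (H ⊗[K] H) →ₐ[K] (H ⊗[K] H) ⊗[K] H :=
  Algebra.TensorProduct.map
    (Algebra.TensorProduct.includeLeft : H →ₐ[K] H ⊗[K] H) (AlgHom.id K H)

/-- `j₂₃ : H ⊗ H → H ⊗ H ⊗ H`, `a ⊗ b ↦ 1 ⊗ a ⊗ b`. -/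
noncomputable def j23 : (H ⊗[K] H) →ₐ[K] (H ⊗[K] H) ⊗[K] H :=
  Algebra.TensorProduct.map
    (Algebra.TensorProduct.includeRight : H →ₐ[K] H ⊗[K] H) (AlgHom.id K H)

/-- The transfer matrix of `R ∈ H ⊗ H` with respect to a finite-dimensional representation
`ρ : H → End(U)` : the image of `R` under the linear map induced by `a ⊗ b ↦ tr(ρ(a))·b`. -/
noncomputable def transferMatrix (U : Type*) [AddCommGroup U] [Module K U]
    (ρ : H →ₐ[K] Module.End K U) (R : H ⊗[K] H) : H :=
  TensorProduct.lift (LinearMap.lsmul K H ∘ₗ LinearMap.trace K U ∘ₗ ρ.toLinearMap) R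

/-- The representation of `H` on `V ⊗ W`: the composition of the comultiplication `Δ` with
`ρ_V ⊗ ρ_W` and the canonical algebra map `End(V) ⊗ End(W) → End(V ⊗ W)`. -/
noncomputable def tensorRep (V W : Type*) [AddCommGroup V] [Module K V]
    [AddCommGroup W] [Module K W]
    (ρV : H →ₐ[K] Module.End K V) (ρW : H →ₐ[K] Module.End K W) :
    H →ₐ[K] Module.End K (V ⊗[K] W) :=
  ((Module.endTensorEndAlgHom :
      Module.End K V ⊗[K] Module.End K W →ₐ[K] Module.End K (V ⊗[K] W)).comp
    (Algebra.TensorProduct.map ρV ρW)).comp (Bialgebra.comulAlgHom K H)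

/-- If `(Δ ⊗ id)(R) = R₁₃ · R₂₃`, then the transfer-matrix construction is multiplicative on
tensor products of finite-dimensional representations: `𝒯_{V⊗W} = 𝒯_V · 𝒯_W` in `H`. -/
theorem transferMatrix_tensor (R : H ⊗[K] H)
    (hR : TensorProduct.map (Coalgebra.comul (R := K) (A := H)) LinearMap.id R =
      j13 K H R * j23 K H R)
    (V W : Type*) [AddCommGroup V] [Module K V] [FiniteDimensional K V]
    [AddCommGroup W] [Module K W] [FiniteDimensional K W]
    (ρV : H →ₐ[K] Module.End K V) (ρW : H →ₐ[K] Module.End K W) :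
    transferMatrix K H (V ⊗[K] W) (tensorRep K H V W ρV ρW) R =
      transferMatrix K H V ρV R * transferMatrix K H W ρW R := by
  set tV : H →ₗ[K] K := LinearMap.trace K V ∘ₗ ρV.toLinearMap with htV
  set tW : H →ₗ[K] K := LinearMap.trace K W ∘ₗ ρW.toLinearMap with htW
  set ψ : (H ⊗[K] H) ⊗[K] H →ₗ[K] H :=
    TensorProduct.lift ((LinearMap.lsmul K H) ∘ₗ
      (LinearMap.mul' K K ∘ₗ TensorProduct.map tV tW)) with hψ
  -- Step 1: LHS = ψ ((Δ ⊗ id) R)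
  have step1 : transferMatrix K H (V ⊗[K] W) (tensorRep K H V W ρV ρW) R =
      ψ (TensorProduct.map (Coalgebra.comul (R := K) (A := H)) LinearMap.id R) := by
    unfold transferMatrix
    rw [← LinearMap.comp_apply]
    congr 1
    apply TensorProduct.ext'
    intro a b
    simp only [LinearMap.comp_apply, TensorProduct.map_tmul, TensorProduct.lift.tmul,
      LinearMap.id_coe, id_eq]
    -- goal: tr(ρVW a) • b = ψ (comul a ⊗ b)
    have key : ∀ x : H ⊗[K] H,
        (LinearMap.trace K (V ⊗[K] W))
          ((Module.endTensorEndAlgHom : Module.End K V ⊗[K] Module.End K W →ₐ[K]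
              Module.End K (V ⊗[K] W)) ((Algebra.TensorProduct.map ρV ρW) x))
        = (LinearMap.mul' K K) ((TensorProduct.map tV tW) x) := by
      intro x
      induction x using TensorProduct.induction_on with
      | zero => simp
      | tmul c d =>
        have : ((Module.endTensorEndAlgHom : Module.End K V ⊗[K] Module.End K W →ₐ[K]
              Module.End K (V ⊗[K] W)) ((Algebra.TensorProduct.map ρV ρW) (c ⊗ₜ[K] d)))
            = TensorProduct.map (ρV c) (ρW d) := rfl
        rw [this]
        simp [tV, tW, LinearMap.trace_tensorProduct' (R := K)]
      | add x y hx hy => simp only [map_add, hx, hy]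
    have : (LinearMap.trace K (V ⊗[K] W)) ((tensorRep K H V W ρV ρW) a)
        = (LinearMap.mul' K K ∘ₗ TensorProduct.map tV tW)
            (Coalgebra.comul (R := K) (A := H) a) := by
      unfold tensorRep
      simpa using key (Bialgebra.comulAlgHom K H a)
    rw [hψ]
    simp only [TensorProduct.lift.tmul, LinearMap.comp_apply, AlgHom.toLinearMap_apply] at this ⊢
    rw [this]
  -- Step 2: ψ (j13 R * j23 S) = T_V R * T_W S
  have step2 : ∀ (R S : H ⊗[K] H), ψ (j13 K H R * j23 K H S) =
      TensorProduct.lift (LinearMap.lsmul K H ∘ₗ tV) R *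
        TensorProduct.lift (LinearMap.lsmul K H ∘ₗ tW) S := by
    intro R S
    induction R using TensorProduct.induction_on with
    | zero => simp
    | add x y hx hy => simp [map_add, add_mul, hx, hy]
    | tmul a b =>
      induction S using TensorProduct.induction_on with
      | zero => simp
      | add x y hx hy => simp [map_add, mul_add, hx, hy]
      | tmul c d =>
        simp only [j13, j23, Algebra.TensorProduct.map_tmul,
          Algebra.TensorProduct.includeLeft_apply,
          Algebra.TensorProduct.includeRight_apply, AlgHom.coe_id, id_eq,
          Algebra.TensorProduct.tmul_mul_tmul, one_mul, mul_one, hψ,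
          TensorProduct.lift.tmul, TensorProduct.map_tmul, LinearMap.comp_apply,
          LinearMap.mul'_apply, LinearMap.lsmul_apply]
        rw [smul_mul_smul_comm]
  rw [step1, hR, step2]
  rfl

end
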